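/- arXiv:1809.05414 — 3 statements merged into one kernel-verified Lean document; each statement's English description precedes it below -/
import Mathlib

section
/- The function W(x) = (1 + |x|²/15)^(−3/2) on ℝ⁵ satisfies the elliptic equation ΔW + W^(7/3) = 0. -/
/-!
`W = g(‖x‖²)` with `g t = (1 + t/15)^(-3/2)`, and for any profile `g` the chain rule gives
`Δ (g ∘ ‖·‖²) = 4‖x‖² g''(‖x‖²) + 2n g'(‖x‖²)` on `ℝⁿ`. With `u = 1 + ‖x‖²/15` this is
`u^(-7/2) (‖x‖²/15 - u) = -u^(-7/2) = -W^(7/3)`.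
-/

noncomputable section

open MeasureTheory

/-- The ground state on ℝ⁵. -/
def W (x : EuclideanSpace ℝ (Fin 5)) : ℝ := (1 + ‖x‖ ^ 2 / 15) ^ (-(3 : ℝ) / 2)

/-- The Laplacian as the sum of second partial derivatives. -/
def lap (f : EuclideanSpace ℝ (Fin 5) → ℝ) (x : EuclideanSpace ℝ (Fin 5)) : ℝ :=
  ∑ i : Fin 5,
    fderiv ℝ (fun y => fderiv ℝ f y (EuclideanSpace.single i 1)) x (EuclideanSpace.single i 1)

open scoped RealInnerProductSpace

section RadialFunction

variable {E : Type*} [NormedAddCommGroup E] [InnerProductSpace ℝ E] {g g' : ℝ → ℝ} {d : ℝ}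
  {x : E}

theorem HasDerivAt.hasFDerivAt_comp_norm_sq (hg : HasDerivAt g d (‖x‖ ^ 2)) :
    HasFDerivAt (fun y => g (‖y‖ ^ 2)) ((2 * d) • innerSL ℝ x) x := by
  refine (hg.comp_hasFDerivAt x (hasStrictFDerivAt_norm_sq x).hasFDerivAt).congr_fderiv ?_
  ext v
  simp only [smul_apply, coe_innerSL_apply, nsmul_eq_mul, Nat.cast_ofNat,
    smul_eq_mul]
  ring

theorem fderiv_comp_norm_sq_apply (hg : ∀ t, 0 ≤ t → HasDerivAt g (g' t) t) (y v : E) :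
    fderiv ℝ (fun y => g (‖y‖ ^ 2)) y v = 2 * g' (‖y‖ ^ 2) * ⟪y, v⟫ := by
  rw [(hg _ (sq_nonneg _)).hasFDerivAt_comp_norm_sq.fderiv]
  simp [mul_assoc]

theorem fderiv_fderiv_comp_norm_sq_apply_apply (hg : ∀ t, 0 ≤ t → HasDerivAt g (g' t) t)
    (hg' : HasDerivAt g' d (‖x‖ ^ 2)) (v : E) :
    fderiv ℝ (fun y => fderiv ℝ (fun y => g (‖y‖ ^ 2)) y v) x v
      = 4 * d * ⟪x, v⟫ ^ 2 + 2 * g' (‖x‖ ^ 2) * ‖v‖ ^ 2 := by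
  simp_rw [fderiv_comp_norm_sq_apply hg]
  have hinner : HasFDerivAt (fun y : E => ⟪y, v⟫) (innerSL ℝ v) x := by
    convert (innerSL ℝ v).hasFDerivAt using 2 with y
    exact real_inner_comm _ _
  rw [HasFDerivAt.fderiv (f := fun y => 2 * g' (‖y‖ ^ 2) * ⟪y, v⟫)
    ((hg'.hasFDerivAt_comp_norm_sq.const_mul 2).mul hinner)]
  simp only [add_apply, smul_apply, coe_innerSL_apply,
    inner_self_eq_norm_sq_to_K, Real.ringHom_apply, smul_eq_mul]
  ring

end RadialFunction

theorem lap_comp_norm_sq {g g' : ℝ → ℝ} {d : ℝ} {x : EuclideanSpace ℝ (Fin 5)}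
    (hg : ∀ t, 0 ≤ t → HasDerivAt g (g' t) t) (hg' : HasDerivAt g' d (‖x‖ ^ 2)) :
    lap (fun y => g (‖y‖ ^ 2)) x = 4 * ‖x‖ ^ 2 * d + 10 * g' (‖x‖ ^ 2) := by
  simp only [lap, fderiv_fderiv_comp_norm_sq_apply_apply hg hg',
    EuclideanSpace.inner_single_right, PiLp.norm_single, Real.ringHom_apply, one_mul,
    norm_one, one_pow, mul_one, Finset.sum_add_distrib, ← Finset.mul_sum, Finset.sum_const,
    Finset.card_univ, Fintype.card_fin, nsmul_eq_mul, Nat.cast_ofNat]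
  rw [← EuclideanSpace.real_norm_sq_eq]
  ring

theorem hasDerivAt_one_add_div_rpow (c p : ℝ) {t : ℝ} (ht : 1 + t / c ≠ 0) :
    HasDerivAt (fun t => (1 + t / c) ^ p) (p / c * (1 + t / c) ^ (p - 1)) t := by
  convert (((hasDerivAt_id' t).div_const c).const_add 1).rpow_const (p := p) (Or.inl ht) using 1
  ring

theorem ground_state_equation :
    ∀ x : EuclideanSpace ℝ (Fin 5), lap W x + (W x) ^ ((7 : ℝ) / 3) = 0 := by
  intro x
  have hpos : ∀ t : ℝ, 0 ≤ t → 1 + t / 15 ≠ 0 := fun t ht => by positivity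
  have hlap := lap_comp_norm_sq (fun t ht => hasDerivAt_one_add_div_rpow 15 (-3 / 2) (hpos t ht))
    ((hasDerivAt_one_add_div_rpow 15 (-3 / 2 - 1) (hpos _ (sq_nonneg ‖x‖))).const_mul (-3 / 2 / 15))
  set u := 1 + ‖x‖ ^ 2 / 15
  have hu0 : 0 < u := by positivity
  have hW : W x ^ ((7 : ℝ) / 3) = u ^ (-7 / 2 : ℝ) := by
    rw [W, ← Real.rpow_mul hu0.le]; norm_num
  have hu52 : u ^ (-3 / 2 - 1 : ℝ) = u ^ (-7 / 2 : ℝ) * u := by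
    rw [← Real.rpow_add_one hu0.ne']; norm_num
  have hu72 : u ^ (-3 / 2 - 1 - 1 : ℝ) = u ^ (-7 / 2 : ℝ) := by norm_num
  change lap (fun y => (1 + ‖y‖ ^ 2 / 15) ^ (-(3 : ℝ) / 2)) x + _ = 0
  rw [hlap, hW, hu52, hu72]
  ring
end
end

section
/- For every p > 1 and every finite family of real numbers (r_k)_{k=1}^K, one has ||Σ_k r_k|^p − Σ_k |r_k|^p| ≤ C(p,K) Σ_{k'≠k} |r_{k'}| |r_k|^(p−1) for some constant C(p,K) depending only on p and K. -/
open Real Finset Set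

/-!
Compare both sides with `M ^ p`, where `M = |r i|` is the largest of the `|r k|`. Since `t ^ p` is
`p B ^ (p - 1)`-Lipschitz on `[0, B]` and `|∑ r| ≤ K M`, the quantity `||∑ r| ^ p - M ^ p|` is at most
`p (K M) ^ (p - 1) ∑_{k ≠ i} |r k|`; and
`∑ |r k| ^ p - M ^ p = ∑_{k ≠ i} |r k| ^ p ≤ ∑_{k ≠ i} |r k| M ^ (p - 1)`.
Both bounds are multiples of the `k = i` row of the double sum.
-/

lemma abs_rpow_sub_rpow_le_of_mem_Icc {p B x y : ℝ} (hp : 1 ≤ p) (hx : x ∈ Icc 0 B)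
    (hy : y ∈ Icc 0 B) : |x ^ p - y ^ p| ≤ p * B ^ (p - 1) * |x - y| := by
  have hderiv : ∀ z ∈ Icc 0 B, HasDerivWithinAt (· ^ p) (p * z ^ (p - 1)) (Icc 0 B) z :=
    fun z _ => (hasDerivAt_rpow_const (Or.inr hp)).hasDerivWithinAt
  have hbound : ∀ z ∈ Icc 0 B, ‖p * z ^ (p - 1)‖ ≤ p * B ^ (p - 1) := by
    rintro z ⟨hz0, hzB⟩
    rw [Real.norm_of_nonneg (by positivity)]
    gcongr
  simpa only [Real.norm_eq_abs] using
    (convex_Icc 0 B).norm_image_sub_le_of_norm_hasDerivWithin_le hderiv hbound hy hx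

lemma rpow_le_mul_rpow_sub_one {p a M : ℝ} (hp : 1 ≤ p) (ha : 0 ≤ a) (haM : a ≤ M) :
    a ^ p ≤ a * M ^ (p - 1) := by
  calc a ^ p = a * a ^ (p - 1) := by
        rw [← rpow_one_add' ha (by linarith), add_sub_cancel]
    _ ≤ a * M ^ (p - 1) := by gcongr

section MaxTerm

variable {ι : Type*} [Fintype ι] [DecidableEq ι] (r : ι → ℝ) (i : ι)

lemma abs_abs_sum_sub_abs_le_sum_erase :
    |(|∑ k, r k| - |r i|)| ≤ ∑ k ∈ univ.erase i, |r k| :=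
  calc |(|∑ k, r k| - |r i|)| ≤ |∑ k, r k - r i| := abs_abs_sub_abs_le_abs_sub _ _
    _ = |∑ k ∈ univ.erase i, r k| := by rw [← add_sum_erase _ _ (mem_univ i), add_sub_cancel_left]
    _ ≤ ∑ k ∈ univ.erase i, |r k| := abs_sum_le_sum_abs _ _

variable {p : ℝ} (hp : 1 ≤ p) (hi : ∀ k, |r k| ≤ |r i|)
include hp hi

lemma abs_abs_sum_rpow_sub_rpow_le :
    |(|∑ k, r k| ^ p - |r i| ^ p)| ≤
      p * Fintype.card ι ^ (p - 1) * ((∑ k ∈ univ.erase i, |r k|) * |r i| ^ (p - 1)) := by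
  have hsum : |∑ k, r k| ≤ Fintype.card ι * |r i| :=
    calc |∑ k, r k| ≤ ∑ k, |r k| := abs_sum_le_sum_abs _ _
      _ ≤ ∑ _k : ι, |r i| := sum_le_sum fun k _ => hi k
      _ = Fintype.card ι * |r i| := by rw [sum_const, nsmul_eq_mul, card_univ]
  have hcard : (1 : ℝ) ≤ Fintype.card ι := by
    exact_mod_cast Fintype.card_pos_iff.mpr ⟨i⟩
  have hi_le : |r i| ≤ Fintype.card ι * |r i| := le_mul_of_one_le_left (abs_nonneg _) hcard
  calc |(|∑ k, r k| ^ p - |r i| ^ p)|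
      ≤ p * (Fintype.card ι * |r i|) ^ (p - 1) * |(|∑ k, r k| - |r i|)| :=
        abs_rpow_sub_rpow_le_of_mem_Icc hp ⟨abs_nonneg _, hsum⟩ ⟨abs_nonneg _, hi_le⟩
    _ ≤ p * (Fintype.card ι * |r i|) ^ (p - 1) * ∑ k ∈ univ.erase i, |r k| := by
        gcongr
        exact abs_abs_sum_sub_abs_le_sum_erase r i
    _ = _ := by rw [mul_rpow (Nat.cast_nonneg _) (abs_nonneg _)]; ring

lemma abs_sum_rpow_sub_rpow_le :
    |(∑ k, |r k| ^ p - |r i| ^ p)| ≤ (∑ k ∈ univ.erase i, |r k|) * |r i| ^ (p - 1) := by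
  rw [← add_sum_erase _ _ (mem_univ i), add_sub_cancel_left,
    abs_of_nonneg (sum_nonneg fun k _ => by positivity), sum_mul]
  exact sum_le_sum fun k _ => rpow_le_mul_rpow_sub_one hp (abs_nonneg _) (hi k)

lemma abs_abs_sum_rpow_sub_sum_rpow_le :
    |(|∑ k, r k| ^ p - ∑ k, |r k| ^ p)| ≤
      (p * Fintype.card ι ^ (p - 1) + 1) * ((∑ k ∈ univ.erase i, |r k|) * |r i| ^ (p - 1)) := by
  have := abs_sub_le (|∑ k, r k| ^ p) (|r i| ^ p) (∑ k, |r k| ^ p)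
  rw [abs_sub_comm (|r i| ^ p)] at this
  linarith [abs_abs_sum_rpow_sub_rpow_le r i hp hi, abs_sum_rpow_sub_rpow_le r i hp hi]

end MaxTerm

theorem abs_pow_sum_sub_sum_pow (p : ℝ) (hp : 1 < p) (K : ℕ) :
    ∃ C > (0 : ℝ), ∀ r : Fin K → ℝ,
      |(|∑ k, r k| ^ p - ∑ k, |r k| ^ p)| ≤
        C * ∑ k, ∑ k', (if k' ≠ k then |r k'| * |r k| ^ (p - 1) else 0) := by
  refine ⟨p * K ^ (p - 1) + 1, by positivity, fun r => ?_⟩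
  rcases isEmpty_or_nonempty (Fin K) with _ | _
  · simp [zero_rpow (by linarith : p ≠ 0)]
  obtain ⟨i, hi⟩ := Finite.exists_max fun k => |r k|
  have hterm : (∑ k ∈ univ.erase i, |r k|) * |r i| ^ (p - 1) =
      ∑ k', (if k' ≠ i then |r k'| * |r i| ^ (p - 1) else 0) := by
    rw [sum_mul, ← sum_filter, filter_ne']
  calc |(|∑ k, r k| ^ p - ∑ k, |r k| ^ p)|
      ≤ (p * K ^ (p - 1) + 1) * ((∑ k ∈ univ.erase i, |r k|) * |r i| ^ (p - 1)) := by
        simpa using abs_abs_sum_rpow_sub_sum_rpow_le r i hp.le hi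
    _ ≤ _ := by
        rw [hterm]
        refine mul_le_mul_of_nonneg_left ?_ (by positivity)
        exact single_le_sum (f := fun k => ∑ k', (if k' ≠ k then |r k'| * |r k| ^ (p - 1) else 0))
          (fun k _ => sum_nonneg fun k' _ => by split_ifs <;> positivity) (mem_univ i)
end

section
/- Let H_ℓ be the matrix operator H_ℓ = [[−Δ − (7/3)W_ℓ^(4/3), −ℓ·∇],[ℓ·∇, Id]] and Z_ℓ^W = (W_ℓ, −ℓ·∇W_ℓ)ᵀ. Then the pairing ⟨H_ℓ Z_ℓ^W, Z_ℓ^W⟩_{L²} = −(4/3)∫_{ℝ⁵} W_ℓ^(10/3). -/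
noncomputable section

open MeasureTheory RealInnerProductSpace

def Tl (l x : EuclideanSpace ℝ (Fin 5)) : EuclideanSpace ℝ (Fin 5) :=
  (((1 - ‖l‖ ^ 2) ^ (-(1 : ℝ) / 2) - 1) * (⟪l, x⟫ / ‖l‖ ^ 2)) • l + x

def Wl (l x : EuclideanSpace ℝ (Fin 5)) : ℝ := W (Tl l x)

/-- Directional derivative `ℓ·∇f`. -/
def dl (l : EuclideanSpace ℝ (Fin 5)) (f : EuclideanSpace ℝ (Fin 5) → ℝ)
    (x : EuclideanSpace ℝ (Fin 5)) : ℝ :=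
  fderiv ℝ f x l

/-!
Write `W_ℓ = W ∘ A` with `A = I + (γ - 1) ℓℓᵀ / |ℓ|²` the symmetric Lorentz boost. Since
`A (I - ℓℓᵀ) Aᵀ = I`, the chain rule turns `Δ - (ℓ·∇)²` applied to `W ∘ A` into `(ΔW) ∘ A`, and the
bubble `W = (1 + |x|² / 15) ^ (-3/2)` solves `ΔW = -W ^ (7/3)`. So `W_ℓ` solves the transformed
equation, the second component of `H_ℓ Z_ℓ^W` vanishes, and the pairing is `-(4/3) W_ℓ ^ (10/3)`
already pointwise.
-/

section Lorentz

variable {E : Type*} [NormedAddCommGroup E]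

def lorentzFactor (l : E) : ℝ := (1 - ‖l‖ ^ 2) ^ (-(1 : ℝ) / 2)

lemma lorentzFactor_sq_mul {l : E} (hl : ‖l‖ < 1) : lorentzFactor l ^ 2 * (1 - ‖l‖ ^ 2) = 1 := by
  have hpos : 0 < 1 - ‖l‖ ^ 2 := by nlinarith [norm_nonneg l]
  rw [lorentzFactor, ← Real.rpow_natCast, ← Real.rpow_mul hpos.le, Nat.cast_ofNat,
    show -(1 : ℝ) / 2 * 2 = -1 by norm_num, Real.rpow_neg_one, inv_mul_cancel₀ hpos.ne']

variable [InnerProductSpace ℝ E]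

/-- At `l = 0` the coefficient is `0 / 0 = 0`, so `lorentzMap 0 = id`, as it should be. -/
def lorentzMap (l : E) : E →L[ℝ] E :=
  ContinuousLinearMap.id ℝ E +
    ((lorentzFactor l - 1) / ‖l‖ ^ 2) • (innerSL ℝ l).smulRight l

lemma lorentzMap_apply (l z : E) :
    lorentzMap l z = z + ((lorentzFactor l - 1) / ‖l‖ ^ 2 * ⟪l, z⟫) • l := by
  simp [lorentzMap, smul_smul]

lemma inner_lorentzMap_left (l z w : E) : ⟪lorentzMap l z, w⟫ = ⟪z, lorentzMap l w⟫ := by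
  simp only [lorentzMap_apply, inner_add_left, inner_add_right, real_inner_smul_left,
    real_inner_smul_right, real_inner_comm l]
  ring

lemma lorentzMap_apply_self (l : E) : lorentzMap l l = lorentzFactor l • l := by
  rcases eq_or_ne l 0 with rfl | hl0
  · simp
  have hm : ‖l‖ ^ 2 ≠ 0 := by positivity
  rw [lorentzMap_apply, real_inner_self_eq_norm_sq, div_mul_cancel₀ _ hm, sub_smul, one_smul]
  abel

lemma norm_lorentzMap_sq {l : E} (hl : ‖l‖ < 1) (z : E) :
    ‖lorentzMap l z‖ ^ 2 = ‖z‖ ^ 2 + lorentzFactor l ^ 2 * ⟪l, z⟫ ^ 2 := by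
  rcases eq_or_ne l 0 with rfl | hl0
  · simp [lorentzMap_apply]
  set γ := lorentzFactor l
  set m := ‖l‖ ^ 2 with hm_def
  have hm : m ≠ 0 := by positivity
  set c := (γ - 1) / m
  have hcm : c * m = γ - 1 := div_mul_cancel₀ _ hm
  -- `c * m = γ - 1` and `γ ^ 2 * (1 - m) = 1` force `2 c + c ^ 2 m = γ ^ 2`
  have hc : 2 * c + c ^ 2 * m = γ ^ 2 := by
    refine mul_right_cancel₀ hm ?_
    linear_combination (γ + 1 + c * m) * hcm + lorentzFactor_sq_mul hl
  rw [lorentzMap_apply, ← real_inner_self_eq_norm_sq, ← real_inner_self_eq_norm_sq z]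
  simp only [inner_add_left, inner_add_right, real_inner_smul_left, real_inner_smul_right,
    real_inner_self_eq_norm_sq l]
  rw [real_inner_comm l z]
  linear_combination ⟪l, z⟫ ^ 2 * hc

end Lorentz

section Bubble

variable {E F : Type*} [NormedAddCommGroup E] [NormedSpace ℝ E] [NormedAddCommGroup F]

def bubble (p : ℝ) (y : F) : ℝ := (1 + ‖y‖ ^ 2 / 15) ^ p

lemma bubble_pos (p : ℝ) (y : F) : 0 < bubble p y := by
  unfold bubble
  positivity

variable [InnerProductSpace ℝ F]

lemma hasFDerivAt_bubble_comp (A : E →L[ℝ] F) (p : ℝ) (x : E) :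
    HasFDerivAt (fun z => bubble p (A z))
      ((2 * p / 15 * bubble (p - 1) (A x)) • (innerSL ℝ (A x)).comp A) x := by
  have hbase : 1 + ‖A x‖ ^ 2 / 15 ≠ 0 := by positivity
  have hprofile : HasDerivAt (fun t : ℝ => (1 + t / 15) ^ p)
      (1 / 15 * p * (1 + ‖A x‖ ^ 2 / 15) ^ (p - 1)) (‖A x‖ ^ 2) :=
    (((hasDerivAt_id' _).div_const 15).const_add 1).rpow_const (Or.inl hbase)
  have h := hprofile.comp_hasFDerivAt x (A.hasFDerivAt (x := x)).norm_sq
  refine h.congr_fderiv ?_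
  ext v
  simp only [bubble, smul_apply, ContinuousLinearMap.comp_apply, coe_innerSL_apply, nsmul_eq_mul,
    Nat.cast_ofNat, smul_eq_mul]
  ring

lemma fderiv_bubble_comp (A : E →L[ℝ] F) (p : ℝ) (x v : E) :
    fderiv ℝ (fun z => bubble p (A z)) x v = 2 * p / 15 * bubble (p - 1) (A x) * ⟪A x, A v⟫ := by
  simp [(hasFDerivAt_bubble_comp A p x).fderiv]

lemma fderiv_fderiv_bubble_comp (A : E →L[ℝ] F) (p : ℝ) (x u v : E) :
    fderiv ℝ (fun y => fderiv ℝ (fun z => bubble p (A z)) y v) x u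
      = 4 * p * (p - 1) / 225 * bubble (p - 2) (A x) * ⟪A x, A u⟫ * ⟪A x, A v⟫
        + 2 * p / 15 * bubble (p - 1) (A x) * ⟪A u, A v⟫ := by
  simp_rw [fderiv_bubble_comp, real_inner_comm (A v)]
  have hinner : HasFDerivAt (fun y => ⟪A v, A y⟫) ((innerSL ℝ (A v)).comp A) x :=
    ((innerSL ℝ (A v)).comp A).hasFDerivAt
  rw [(((hasFDerivAt_bubble_comp A (p - 1) x).const_mul (2 * p / 15)).fun_mul hinner).fderiv]
  simp only [add_apply, smul_apply, ContinuousLinearMap.comp_apply, innerSL_apply_apply, smul_eq_mul]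
  rw [show p - 1 - 1 = p - 2 by ring]
  ring

end Bubble

abbrev E5 := EuclideanSpace ℝ (Fin 5)

/-- `A (I - l lᵀ) Aᵀ = I`, written as an identity of quadratic forms: composing with `A`
conjugates `Δ - (l·∇)²` to `Δ`. -/
def LorentzCompatible (A : E5 →L[ℝ] E5) (l : E5) : Prop :=
  ∀ z : E5, ∑ i, ⟪A (EuclideanSpace.single i 1), z⟫ ^ 2 - ⟪A l, z⟫ ^ 2 = ‖z‖ ^ 2

lemma sum_sq_inner_single (v : E5) :
    ∑ i, ⟪EuclideanSpace.single i (1 : ℝ), v⟫ ^ 2 = ‖v‖ ^ 2 := by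
  simpa using (EuclideanSpace.basisFun (Fin 5) ℝ).sum_sq_inner_right v

lemma LorentzCompatible.sum_norm_sq_sub {A : E5 →L[ℝ] E5} {l : E5} (hA : LorentzCompatible A l) :
    ∑ i, ‖A (EuclideanSpace.single i 1)‖ ^ 2 - ‖A l‖ ^ 2 = 5 := by
  simp only [← sum_sq_inner_single (A _), real_inner_comm (A _)]
  rw [Finset.sum_comm, ← Finset.sum_sub_distrib, Finset.sum_congr rfl fun j _ => hA _]
  simp

lemma lorentzCompatible_lorentzMap {l : E5} (hl : ‖l‖ < 1) : LorentzCompatible (lorentzMap l) l := by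
  intro z
  rw [lorentzMap_apply_self, real_inner_smul_left]
  simp only [inner_lorentzMap_left, sum_sq_inner_single, norm_lorentzMap_sq hl]
  ring

lemma lap_sub_fderiv_fderiv_bubble_comp {A : E5 →L[ℝ] E5} {l : E5} (hA : LorentzCompatible A l)
    (p : ℝ) (x : E5) :
    lap (fun z => bubble p (A z)) x - fderiv ℝ (fun y => fderiv ℝ (fun z => bubble p (A z)) y l) x l
      = 4 * p * (p - 1) / 225 * bubble (p - 2) (A x) * ‖A x‖ ^ 2
        + 2 * p / 3 * bubble (p - 1) (A x) := by
  have hquad := hA (A x)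
  have htrace := hA.sum_norm_sq_sub
  simp only [real_inner_comm (A x)] at hquad
  simp only [lap, fderiv_fderiv_bubble_comp, real_inner_self_eq_norm_sq, mul_assoc, ← sq,
    Finset.sum_add_distrib, ← Finset.mul_sum]
  linear_combination (4 * p * (p - 1) / 225 * bubble (p - 2) (A x)) * hquad
    + (2 * p / 15 * bubble (p - 1) (A x)) * htrace

lemma lap_bubble (p : ℝ) (y : E5) :
    lap (bubble p) y = 4 * p * (p - 1) / 225 * bubble (p - 2) y * ‖y‖ ^ 2
      + 2 * p / 3 * bubble (p - 1) y := by
  have hid : LorentzCompatible (ContinuousLinearMap.id ℝ E5) 0 := fun z => by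
    simpa [real_inner_comm] using sum_sq_inner_single z
  simpa using lap_sub_fderiv_fderiv_bubble_comp hid p y

lemma lap_bubble_comp_sub_fderiv_fderiv {A : E5 →L[ℝ] E5} {l : E5} (hA : LorentzCompatible A l)
    (p : ℝ) (x : E5) :
    lap (fun z => bubble p (A z)) x - fderiv ℝ (fun y => fderiv ℝ (fun z => bubble p (A z)) y l) x l
      = lap (bubble p) (A x) := by
  rw [lap_sub_fderiv_fderiv_bubble_comp hA, lap_bubble]

lemma W_eq_bubble : W = bubble (-(3 : ℝ) / 2) := rfl

lemma lap_W (y : E5) : lap W y = -W y ^ ((7 : ℝ) / 3) := by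
  rw [W_eq_bubble, lap_bubble]
  have hc : 0 < 1 + ‖y‖ ^ 2 / 15 := by positivity
  simp only [bubble]
  set c := 1 + ‖y‖ ^ 2 / 15 with hc_def
  rw [← Real.rpow_mul hc.le, show -(3 : ℝ) / 2 - 1 = -(7 : ℝ) / 2 + 1 by norm_num,
    Real.rpow_add_one hc.ne']
  norm_num
  linear_combination (-(1 : ℝ) * c ^ (-(7 : ℝ) / 2)) * hc_def

lemma Tl_eq_lorentzMap (l x : E5) : Tl l x = lorentzMap l x := by
  rw [Tl, lorentzMap_apply, add_comm, lorentzFactor]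
  congr 2
  ring

lemma Wl_eq_bubble_comp (l : E5) : Wl l = fun x => bubble (-(3 : ℝ) / 2) (lorentzMap l x) := by
  funext x
  rw [Wl, Tl_eq_lorentzMap, W_eq_bubble]

lemma lap_Wl_sub_dl_dl {l : E5} (hl : ‖l‖ < 1) (x : E5) :
    lap (Wl l) x - dl l (dl l (Wl l)) x = -Wl l x ^ ((7 : ℝ) / 3) := by
  rw [Wl_eq_bubble_comp]
  unfold dl
  exact (lap_bubble_comp_sub_fderiv_fderiv (lorentzCompatible_lorentzMap hl) _ x).trans (lap_W _)

theorem pairing_HZW_ZW_general (l : EuclideanSpace ℝ (Fin 5)) (hl : ‖l‖ < 1) :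
    (∫ x, (((-lap (Wl l) x - (7 / 3) * (Wl l x) ^ ((4 : ℝ) / 3) * Wl l x)
          - dl l (fun y => -(dl l (Wl l) y)) x) * Wl l x
        + (dl l (Wl l) x + -(dl l (Wl l) x)) * (-(dl l (Wl l) x))))
      = -(4 / 3) * ∫ x, (Wl l x) ^ ((10 : ℝ) / 3) := by
  have hpointwise : ∀ x, ((-lap (Wl l) x - (7 / 3) * (Wl l x) ^ ((4 : ℝ) / 3) * Wl l x)
          - dl l (fun y => -(dl l (Wl l) y)) x) * Wl l x
        + (dl l (Wl l) x + -(dl l (Wl l) x)) * (-(dl l (Wl l) x))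
      = -(4 / 3) * (Wl l x) ^ ((10 : ℝ) / 3) := by
    intro x
    have hW : Wl l x ≠ 0 := by
      rw [Wl_eq_bubble_comp]
      exact (bubble_pos _ _).ne'
    have hneg : dl l (fun y => -(dl l (Wl l) y)) x = -dl l (dl l (Wl l)) x := by
      unfold dl
      rw [fderiv_fun_neg, neg_apply]
    have h7 : Wl l x ^ ((4 : ℝ) / 3) * Wl l x = Wl l x ^ ((7 : ℝ) / 3) := by
      rw [← Real.rpow_add_one hW]
      norm_num
    have h10 : Wl l x ^ ((7 : ℝ) / 3) * Wl l x = Wl l x ^ ((10 : ℝ) / 3) := by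
      rw [← Real.rpow_add_one hW]
      norm_num
    rw [hneg]
    linear_combination (-Wl l x) * lap_Wl_sub_dl_dl hl x - (7 / 3) * Wl l x * h7 + (-4 / 3) * h10
  simp_rw [hpointwise]
  exact integral_const_mul _ _

theorem pairing_HZW_ZW (l : EuclideanSpace ℝ (Fin 5)) (hl0 : l ≠ 0) (hl : ‖l‖ < 1) :
    (∫ x, (((-lap (Wl l) x - (7 / 3) * (Wl l x) ^ ((4 : ℝ) / 3) * Wl l x)
          - dl l (fun y => -(dl l (Wl l) y)) x) * Wl l x
        + (dl l (Wl l) x + -(dl l (Wl l) x)) * (-(dl l (Wl l) x))))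
      = -(4 / 3) * ∫ x, (Wl l x) ^ ((10 : ℝ) / 3) :=
  pairing_HZW_ZW_general l hl
end
end
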